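/- arXiv:1207.0535 — 2 statements merged into one kernel-verified Lean document; each statement's English description precedes it below -/
import Mathlib

section
/- Let K and L be regular languages with state complexities m and n. Then the state complexity of Kᴿ \ Lᴿ is at most (2ᵐ − 1)(2ⁿ − 1) + 1. -/
/-!
Reverse each automaton by the subset construction and run the two reversed automata in
parallel. A pair `(S, T)` with `S = ∅` or `T = Q₂` is rejecting, and every successor of such a
pair is again of this form, so all these pairs can be merged into one sink state. Only the
`(2ᵐ - 1)(2ⁿ - 1)` pairs with `S ≠ ∅` and `T ≠ Q₂` survive, besides the sink.
-/

namespace SCPaper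

/-- Reversal of a language. -/
def rev {α : Type} (L : Language α) : Language α := {w | w.reverse ∈ L}

/-- Union of two languages. -/
def lunion {α : Type} (K L : Language α) : Language α := {w | w ∈ K ∨ w ∈ L}

/-- Intersection of two languages. -/
def linter {α : Type} (K L : Language α) : Language α := {w | w ∈ K ∧ w ∈ L}

/-- Difference of two languages. -/
def ldiff {α : Type} (K L : Language α) : Language α := {w | w ∈ K ∧ w ∉ L}

/-- Symmetric difference of two languages. -/
def lsymm {α : Type} (K L : Language α) : Language α := lunion (ldiff K L) (ldiff L K)

/-- Sizes (numbers of states) of complete DFAs recognizing `L`. -/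
def complexitySet {α : Type} (L : Language α) : Set ℕ :=
  {n | ∃ M : DFA α (Fin n), M.accepts = L}

/-- A language is regular if it is recognized by some finite DFA. -/
def Regular {α : Type} (L : Language α) : Prop := (complexitySet L).Nonempty

/-- State complexity: the number of states of a minimal DFA for `L`. -/
noncomputable def sc {α : Type} (L : Language α) : ℕ := sInf (complexitySet L)

/-- The cyclic permutation (0,1,…,n−1). -/
def cyc (n : ℕ) (i : Fin n) : Fin n :=
  ⟨(i.val + 1) % n, Nat.mod_lt _ (Nat.lt_of_le_of_lt (Nat.zero_le _) i.isLt)⟩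

/-- The transposition (0,1). -/
def tp01 (n : ℕ) (i : Fin n) : Fin n :=
  if i.val = 0 then ⟨1 % n, Nat.mod_lt _ (Nat.lt_of_le_of_lt (Nat.zero_le _) i.isLt)⟩
  else if i.val = 1 then ⟨0, Nat.lt_of_le_of_lt (Nat.zero_le _) i.isLt⟩
  else i

/-- The singular map sending n−1 to 0 and fixing everything else. -/
def sing (n : ℕ) (i : Fin n) : Fin n :=
  if i.val = n - 1 then ⟨0, Nat.lt_of_le_of_lt (Nat.zero_le _) i.isLt⟩ else i

/-- The transposition (n−2, n−1). -/
def tpTop (n : ℕ) (i : Fin n) : Fin n :=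
  if i.val = n - 1 then ⟨n - 2, by have := i.isLt; omega⟩
  else if i.val = n - 2 then ⟨n - 1, by have := i.isLt; omega⟩
  else i

/-- The singular map sending n−1 to n−2 and fixing everything else. -/
def singTop (n : ℕ) (i : Fin n) : Fin n :=
  if i.val = n - 1 then ⟨n - 2, by have := i.isLt; omega⟩ else i

/-- 𝒰ₙ(a,b,∅): binary alphabet, a = cycle (0,…,n−1), b = transposition (0,1),
initial state 0, final state n−1. -/
def U2dfa (n : ℕ) (h : 0 < n) : DFA (Fin 2) (Fin n) where
  step := fun i x => if x = 0 then cyc n i else tp01 n i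
  start := ⟨0, h⟩
  accept := {i | i.val = n - 1}

def U2 (n : ℕ) (h : 0 < n) : Language (Fin 2) := (U2dfa n h).accepts

/-- 𝒰ₙ(a,b,c): a = cycle, b = transposition (0,1), c = (n−1 ↦ 0). -/
def Udfa (n : ℕ) (h : 0 < n) : DFA (Fin 3) (Fin n) where
  step := fun i x => if x = 0 then cyc n i else if x = 1 then tp01 n i else sing n i
  start := ⟨0, h⟩
  accept := {i | i.val = n - 1}

def U (n : ℕ) (h : 0 < n) : Language (Fin 3) := (Udfa n h).accepts

/-- 𝒰ₙ(a,b,c) with final state set {0}. -/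
def U0dfa (n : ℕ) (h : 0 < n) : DFA (Fin 3) (Fin n) where
  step := fun i x => if x = 0 then cyc n i else if x = 1 then tp01 n i else sing n i
  start := ⟨0, h⟩
  accept := {i | i.val = 0}

def U0 (n : ℕ) (h : 0 < n) : Language (Fin 3) := (U0dfa n h).accepts

/-- 𝒰ₙ(a,b,c,d): a = cycle, b = transposition (0,1), c = (n−1 ↦ 0), d = identity. -/
def U4dfa (n : ℕ) (h : 0 < n) : DFA (Fin 4) (Fin n) where
  step := fun i x =>
    if x = 0 then cyc n i else if x = 1 then tp01 n i else if x = 2 then sing n i else i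
  start := ⟨0, h⟩
  accept := {i | i.val = n - 1}

def U4 (n : ℕ) (h : 0 < n) : Language (Fin 4) := (U4dfa n h).accepts

/-- 𝒰ₙ(d,c,b,a): d = cycle, c = transposition (0,1), b = (n−1 ↦ 0), a = identity. -/
def U4dcbaDfa (n : ℕ) (h : 0 < n) : DFA (Fin 4) (Fin n) where
  step := fun i x =>
    if x = 3 then cyc n i else if x = 2 then tp01 n i else if x = 1 then sing n i else i
  start := ⟨0, h⟩
  accept := {i | i.val = n - 1}

def U4dcba (n : ℕ) (h : 0 < n) : Language (Fin 4) := (U4dcbaDfa n h).accepts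

/-- 𝒱ₙ(a,b,c,d): a = cycle, b = transposition (n−2,n−1), c = (n−1 ↦ n−2), d = identity. -/
def Vdfa (n : ℕ) (h : 0 < n) : DFA (Fin 4) (Fin n) where
  step := fun i x =>
    if x = 0 then cyc n i else if x = 1 then tpTop n i else if x = 2 then singTop n i else i
  start := ⟨0, h⟩
  accept := {i | i.val = n - 1}

def V (n : ℕ) (h : 0 < n) : Language (Fin 4) := (Vdfa n h).accepts

/-- 𝒱ₙ(d,c,b,a): d = cycle, c = transposition (n−2,n−1), b = (n−1 ↦ n−2), a = identity. -/
def VdcbaDfa (n : ℕ) (h : 0 < n) : DFA (Fin 4) (Fin n) where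
  step := fun i x =>
    if x = 3 then cyc n i else if x = 2 then tpTop n i else if x = 1 then singTop n i else i
  start := ⟨0, h⟩
  accept := {i | i.val = n - 1}

def Vdcba (n : ℕ) (h : 0 < n) : Language (Fin 4) := (VdcbaDfa n h).accepts

/-- Direct product of two DFAs with a chosen set of final states. -/
def prodDFA {α σ₁ σ₂ : Type} (M : DFA α σ₁) (N : DFA α σ₂) (acc : Set (σ₁ × σ₂)) :
    DFA α (σ₁ × σ₂) where
  step := fun p x => (M.step p.1 x, N.step p.2 x)
  start := (M.start, N.start)
  accept := acc


/-- Chinese-remainder style pairing k ↦ (k mod m, k mod n). -/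
def toPair (m n : ℕ) (hm : 0 < m) (hn : 0 < n) (k : Fin (m * n)) : Fin m × Fin n :=
  (⟨k.val % m, Nat.mod_lt _ hm⟩, ⟨k.val % n, Nat.mod_lt _ hn⟩)

/-- Componentwise successor on the product of two cyclic automata. -/
def prodSucc (m n : ℕ) (p : Fin m × Fin n) : Fin m × Fin n := (cyc m p.1, cyc n p.2)

/-- One-letter subset transition of the reversed NFA of 𝒰ₙ(a,b,c). -/
def rstep (n : ℕ) (h : 0 < n) (S : Set (Fin n)) (x : Fin 3) : Set (Fin n) :=
  {q | (Udfa n h).step q x ∈ S}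

/-- Action of a word on subsets in the reversed NFA of 𝒰ₙ(a,b,c). -/
def rword (n : ℕ) (h : 0 < n) (S : Set (Fin n)) (w : List (Fin 3)) : Set (Fin n) :=
  w.foldl (rstep n h) S

end SCPaper

namespace DFA

variable {α σ : Type*} (M : DFA α σ) (B : Set σ)

open Classical in
noncomputable def trapProj (s : σ) : Option ↥Bᶜ :=
  if h : s ∈ B then none else some ⟨s, h⟩

noncomputable def mergeTrap : DFA α (Option ↥Bᶜ) where
  step o a := o.bind fun s => trapProj B (M.step s a)
  start := trapProj B M.start
  accept := {o | ∃ s : ↥Bᶜ, o = some s ∧ (s : σ) ∈ M.accept}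

variable {M B}

theorem trapProj_of_mem {s : σ} (hs : s ∈ B) : trapProj B s = none := dif_pos hs

theorem trapProj_of_notMem {s : σ} (hs : s ∉ B) : trapProj B s = some ⟨s, hs⟩ := dif_neg hs

theorem mergeTrap_step_trapProj (hB : ∀ s ∈ B, ∀ a, M.step s a ∈ B) (s : σ) (a : α) :
    (M.mergeTrap B).step (trapProj B s) a = trapProj B (M.step s a) := by
  by_cases hs : s ∈ B
  · rw [trapProj_of_mem hs, trapProj_of_mem (hB s hs a)]
    rfl
  · rw [trapProj_of_notMem hs]
    rfl

theorem mergeTrap_evalFrom_trapProj (hB : ∀ s ∈ B, ∀ a, M.step s a ∈ B) (s : σ)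
    (w : List α) :
    (M.mergeTrap B).evalFrom (trapProj B s) w = trapProj B (M.evalFrom s w) := by
  induction w generalizing s with
  | nil => rfl
  | cons a w ih => rw [evalFrom_cons, evalFrom_cons, mergeTrap_step_trapProj hB, ih]

theorem trapProj_mem_mergeTrap_accept (hacc : ∀ s ∈ B, s ∉ M.accept) (s : σ) :
    trapProj B s ∈ (M.mergeTrap B).accept ↔ s ∈ M.accept := by
  by_cases hs : s ∈ B
  · simp [mergeTrap, trapProj_of_mem hs, hacc s hs]
  · simp [mergeTrap, trapProj_of_notMem hs, hs]

theorem accepts_mergeTrap (hB : ∀ s ∈ B, ∀ a, M.step s a ∈ B)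
    (hacc : ∀ s ∈ B, s ∉ M.accept) : (M.mergeTrap B).accepts = M.accepts := by
  ext w
  rw [mem_accepts, mem_accepts, eval, eval, ← trapProj_mem_mergeTrap_accept hacc,
    ← mergeTrap_evalFrom_trapProj hB]
  rfl

theorem toNFA_reverse_stepSet_univ (a : α) : M.toNFA.reverse.stepSet Set.univ a = Set.univ :=
  Set.eq_univ_of_forall fun s => NFA.mem_stepSet.2 ⟨M.step s a, Set.mem_univ _, rfl⟩

end DFA

namespace SCPaper

variable {α : Type}

def deadPairs (σ τ : Type*) : Set (Set σ × Set τ) := {p | p.1 = ∅ ∨ p.2 = Set.univ}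

theorem card_compl_deadPairs (σ τ : Type*) [Finite σ] [Finite τ] :
    Nat.card ↥(deadPairs σ τ)ᶜ = (2 ^ Nat.card σ - 1) * (2 ^ Nat.card τ - 1) := by
  classical
  have := Fintype.ofFinite σ
  have := Fintype.ofFinite τ
  have e : ↥(deadPairs σ τ)ᶜ ≃ {S : Set σ // ¬S = ∅} × {T : Set τ // ¬T = Set.univ} :=
    (Equiv.subtypeEquivRight fun p => by simp [deadPairs, not_or]).trans
      Equiv.subtypeProdEquivProd
  rw [Nat.card_congr e, Nat.card_eq_fintype_card, Fintype.card_prod,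
    Fintype.card_subtype_compl, Fintype.card_subtype_compl, Fintype.card_subtype_eq,
    Fintype.card_subtype_eq, Fintype.card_set, Fintype.card_set, Nat.card_eq_fintype_card,
    Nat.card_eq_fintype_card]

section ReverseDiff

variable {σ τ : Type} (M : DFA α σ) (N : DFA α τ)

def reverseDiffDFA : DFA α (Set σ × Set τ) :=
  M.toNFA.reverse.toDFA.inter N.toNFA.reverse.toDFAᶜ

theorem accepts_reverseDiffDFA :
    (reverseDiffDFA M N).accepts = ldiff (rev M.accepts) (rev N.accepts) := by
  rw [reverseDiffDFA, DFA.accepts_inter, DFA.accepts_compl]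
  ext w
  change w ∈ M.toNFA.reverse.toDFA.accepts ∧ w ∉ N.toNFA.reverse.toDFA.accepts ↔
    w.reverse ∈ M.accepts ∧ w.reverse ∉ N.accepts
  simp only [NFA.toDFA_correct, NFA.mem_accepts_reverse, DFA.toNFA_correct]

theorem reverseDiffDFA_step_mem_deadPairs :
    ∀ p ∈ deadPairs σ τ, ∀ a, (reverseDiffDFA M N).step p a ∈ deadPairs σ τ := by
  rintro ⟨S, T⟩ hp a
  obtain rfl | rfl : S = ∅ ∨ T = Set.univ := hp
  · exact Or.inl (NFA.stepSet_empty _ a)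
  · exact Or.inr (DFA.toNFA_reverse_stepSet_univ a)

theorem notMem_reverseDiffDFA_accept :
    ∀ p ∈ deadPairs σ τ, p ∉ (reverseDiffDFA M N).accept := by
  rintro ⟨S, T⟩ hp
  obtain rfl | rfl : S = ∅ ∨ T = Set.univ := hp <;>
    simp [reverseDiffDFA, DFA.compl_def, NFA.toDFA]

end ReverseDiff

theorem sc_accepts_le_card {σ : Type} [Finite σ] (M : DFA α σ) :
    sc M.accepts ≤ Nat.card σ :=
  Nat.sInf_le ⟨M.reindex (Finite.equivFin σ), M.accepts_reindex _⟩

theorem sc_accepts_le_card_compl_add_one {σ : Type} [Finite σ] (M : DFA α σ) (B : Set σ)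
    (hB : ∀ s ∈ B, ∀ a, M.step s a ∈ B) (hacc : ∀ s ∈ B, s ∉ M.accept) :
    sc M.accepts ≤ Nat.card ↥Bᶜ + 1 := by
  rw [← DFA.accepts_mergeTrap hB hacc, ← Finite.card_option]
  exact sc_accepts_le_card _

theorem exists_dfa_of_sc_eq {L : Language α} (hL : Regular L) {n : ℕ} (hn : sc L = n) :
    ∃ M : DFA α (Fin n), M.accepts = L :=
  hn ▸ Nat.sInf_mem hL

end SCPaper

open SCPaper

theorem diff_two_reversed_upper_bound {α : Type} (K L : Language α) (m n : ℕ)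
    (hK : Regular K) (hL : Regular L) (hm : sc K = m) (hn : sc L = n) :
    sc (ldiff (rev K) (rev L)) ≤ (2 ^ m - 1) * (2 ^ n - 1) + 1 := by
  obtain ⟨M, rfl⟩ := exists_dfa_of_sc_eq hK hm
  obtain ⟨N, rfl⟩ := exists_dfa_of_sc_eq hL hn
  calc sc (ldiff (rev M.accepts) (rev N.accepts))
      = sc (reverseDiffDFA M N).accepts := by rw [accepts_reverseDiffDFA]
    _ ≤ Nat.card ↥(deadPairs (Fin m) (Fin n))ᶜ + 1 :=
      sc_accepts_le_card_compl_add_one _ _ (reverseDiffDFA_step_mem_deadPairs M N)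
        (notMem_reverseDiffDFA_accept M N)
    _ = (2 ^ m - 1) * (2 ^ n - 1) + 1 := by
      rw [card_compl_deadPairs, Nat.card_fin, Nat.card_fin]
end

section
/- Let m, n ≥ 3 with m ≠ n. Then the state complexity of Uₘ(a,b,∅) ∩ Uₙ(a,b,∅) is exactly mn. In particular, even when gcd(m, n) > 1, all mn product states are reachable and pairwise distinguishable in the direct product automaton with the single final state (m−1, n−1). -/
open SCPaper

open SCPaper


/-!
Both letters act on the product `Fin m × Fin n` as permutations. Hence once every state is
reachable from the start, every state is reachable from every other one, and with a single
final state `f` two states `p ≠ q` are told apart by any word taking `p` to `f`.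

Reachability, say for `m < n`: the word `b aᵉ b` with `m ∣ e` fixes every state of the
`m`-automaton, while a conjugate `aᵏ b aᵉ b aʳ` of it moves a chosen state `j` of the
`n`-automaton to `j + 1` as soon as `e ≢ 0, -1 (mod n)`; `e = m` works unless `n = m + 1`,
where `e = 2 m` does.
-/

open Function

namespace DFA

variable {α σ : Type*} (M : DFA α σ)

theorem evalFrom_injective (hM : ∀ a, Injective (M.step · a)) (w : List α) :
    Injective (M.evalFrom · w) := by
  induction w with
  | nil => exact injective_id
  | cons a w ih => exact ih.comp (hM a)

theorem evalFrom_flatten_replicate (s : σ) (w : List α) (k : ℕ) :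
    M.evalFrom s (List.replicate k w).flatten = (M.evalFrom · w)^[k] s := by
  induction k generalizing s with
  | zero => rfl
  | succ k ih =>
    rw [List.replicate_succ, List.flatten_cons, evalFrom_of_append, ih, iterate_succ_apply]

theorem exists_evalFrom_evalFrom_eq [Finite σ] (hM : ∀ a, Injective (M.step · a))
    (s : σ) (w : List α) : ∃ u, M.evalFrom (M.evalFrom s w) u = s := by
  let e : Equiv.Perm σ := .ofBijective _ (Finite.injective_iff_bijective.mp
    (M.evalFrom_injective hM w))
  have hid : (M.evalFrom · w)^[orderOf e] = id := by
    change (⇑e)^[orderOf e] = id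
    rw [← Equiv.Perm.coe_pow, pow_orderOf_eq_one]
    rfl
  refine ⟨(List.replicate (orderOf e - 1) w).flatten, ?_⟩
  rw [evalFrom_flatten_replicate, ← iterate_succ_apply, Nat.succ_eq_add_one,
    Nat.sub_add_cancel (orderOf_pos e), hid, id]

theorem exists_evalFrom_eq [Finite σ] (hM : ∀ a, Injective (M.step · a))
    (hreach : Surjective M.eval) (p q : σ) : ∃ w, M.evalFrom p w = q := by
  obtain ⟨v, rfl⟩ := hreach p
  obtain ⟨w, rfl⟩ := hreach q
  obtain ⟨u, hu⟩ := M.exists_evalFrom_evalFrom_eq hM M.start v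
  exact ⟨u ++ w, by rw [evalFrom_of_append, eval, hu]⟩

theorem exists_xor_of_accept_subsingleton (hM : ∀ a, Injective (M.step · a))
    (hconn : ∀ p q, ∃ w, M.evalFrom p w = q) {f : σ} (hf : f ∈ M.accept)
    (hacc : M.accept.Subsingleton) {p q : σ} (hpq : p ≠ q) :
    ∃ w, Xor (M.evalFrom p w ∈ M.accept) (M.evalFrom q w ∈ M.accept) := by
  obtain ⟨w, hw⟩ := hconn p f
  refine ⟨w, .inl ⟨hw ▸ hf, fun hq => hpq (M.evalFrom_injective hM w ?_)⟩⟩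
  exact hw.trans (hacc hf hq)

theorem acceptsFrom_injective
    (hdist : ∀ p q, p ≠ q → ∃ w, Xor (M.evalFrom p w ∈ M.accept) (M.evalFrom q w ∈ M.accept)) :
    Injective M.acceptsFrom := by
  intro p q hpq
  by_contra hne
  obtain ⟨w, hw⟩ := hdist p q hne
  have : M.evalFrom p w ∈ M.accept ↔ M.evalFrom q w ∈ M.accept := Set.ext_iff.mp hpq w
  rcases hw with ⟨hp, hq⟩ | ⟨hq, hp⟩ <;> tauto

theorem card_le_of_accepts_eq {τ : Type*} [Fintype σ] [Fintype τ] (N : DFA α τ)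
    (h : N.accepts = M.accepts) (hreach : Surjective M.eval) (hdist : Injective M.acceptsFrom) :
    Fintype.card σ ≤ Fintype.card τ := by
  choose w hw using hreach
  have hquot (p : σ) : N.acceptsFrom (N.eval (w p)) = M.acceptsFrom p := by
    rw [← Language.leftQuotient_accepts_apply, h, Language.leftQuotient_accepts_apply, hw]
  refine Fintype.card_le_of_injective (fun p => N.eval (w p)) fun p q hpq => hdist ?_
  rw [← hquot, ← hquot]
  exact congrArg N.acceptsFrom hpq

end DFA

namespace SCPaper

theorem sc_accepts_eq_card {α σ : Type} [Fintype σ] (M : DFA α σ) (hreach : Surjective M.eval)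
    (hdist : Injective M.acceptsFrom) : sc M.accepts = Fintype.card σ :=
  le_antisymm (Nat.sInf_le ⟨DFA.reindex (Fintype.equivFin σ) M, M.accepts_reindex _⟩)
    (le_csInf ⟨_, _, M.accepts_reindex (Fintype.equivFin σ)⟩ fun k ⟨N, hN⟩ => by
      simpa using M.card_le_of_accepts_eq N hN hreach hdist)

section Product

variable {α σ₁ σ₂ : Type} (M : DFA α σ₁) (N : DFA α σ₂)

theorem prodDFA_evalFrom (acc : Set (σ₁ × σ₂)) (p : σ₁ × σ₂) (w : List α) :
    (prodDFA M N acc).evalFrom p w = (M.evalFrom p.1 w, N.evalFrom p.2 w) := by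
  induction w generalizing p with
  | nil => rfl
  | cons a w ih => exact ih _

theorem prodDFA_step_injective {M N} (hM : ∀ a, Injective (M.step · a))
    (hN : ∀ a, Injective (N.step · a)) (acc : Set (σ₁ × σ₂)) (a : α) :
    Injective ((prodDFA M N acc).step · a) :=
  (hM a).prodMap (hN a)

theorem accepts_prodDFA_inter :
    (prodDFA M N {x | x.1 ∈ M.accept ∧ x.2 ∈ N.accept}).accepts = linter M.accepts N.accepts :=
  M.accepts_inter N

end Product

theorem exists_dvd_not_dvd_not_dvd_succ {m n : ℕ} (hm : 0 < m) (hmn : m < n) (hn : 3 ≤ n) :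
    ∃ e, m ∣ e ∧ ¬ n ∣ e ∧ ¬ n ∣ e + 1 := by
  rcases (Nat.succ_le_of_lt hmn).lt_or_eq with hlt | heq
  · exact ⟨m, dvd_rfl, Nat.not_dvd_of_pos_of_lt hm hmn, Nat.not_dvd_of_pos_of_lt m.succ_pos hlt⟩
  · refine ⟨2 * m, dvd_mul_left m 2, ?_, ?_⟩
    · rw [show 2 * m = n - 2 + n by omega, Nat.dvd_add_self_right]
      exact Nat.not_dvd_of_pos_of_lt (by omega) (by omega)
    · rw [show 2 * m + 1 = n - 1 + n by omega, Nat.dvd_add_self_right]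
      exact Nat.not_dvd_of_pos_of_lt (by omega) (by omega)

section Cyclic

open Fin.CommRing

variable {n : ℕ} [NeZero n]

theorem cyc_eq_add_one (i : Fin n) : cyc n i = i + 1 := by
  ext
  simp [cyc, Fin.val_add]

theorem tp01_eq_swap (i : Fin n) : tp01 n i = Equiv.swap 0 1 i := by
  unfold tp01
  split_ifs with h0 h1
  · rw [show i = 0 from Fin.ext h0, Equiv.swap_apply_left]
    ext
    simp
  · have : i = 1 := by ext; simp [h1, Nat.mod_eq_of_lt (h1 ▸ i.is_lt)]
    rw [this, Equiv.swap_apply_right]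
    rfl
  · refine (Equiv.swap_apply_of_ne_of_ne (fun h => h0 (by simp [h])) fun h => h1 ?_).symm
    subst h
    simpa [Fin.val_one', Nat.one_mod_eq_one] using h0

theorem U2dfa_step_zero (i : Fin n) : (U2dfa n n.pos_of_neZero).step i 0 = i + 1 :=
  cyc_eq_add_one i

theorem U2dfa_step_one (i : Fin n) :
    (U2dfa n n.pos_of_neZero).step i 1 = Equiv.swap 0 1 i :=
  tp01_eq_swap i

theorem U2dfa_step_injective (x : Fin 2) :
    Injective ((U2dfa n n.pos_of_neZero).step · x) := by
  match x with
  | 0 => simpa only [U2dfa_step_zero] using add_left_injective 1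
  | 1 => simpa only [U2dfa_step_one] using (Equiv.swap 0 1).injective

theorem U2dfa_evalFrom_replicate_zero (i : Fin n) (k : ℕ) :
    (U2dfa n n.pos_of_neZero).evalFrom i (List.replicate k 0) = i + k := by
  induction k with
  | zero => simp
  | succ k ih =>
    rw [List.replicate_succ', DFA.evalFrom_append_singleton, ih, U2dfa_step_zero]
    push_cast
    ring

theorem U2dfa_evalFrom_conj (i : Fin n) (k e r : ℕ) :
    (U2dfa n n.pos_of_neZero).evalFrom i
        (List.replicate k 0 ++ 1 :: List.replicate e 0 ++ 1 :: List.replicate r 0) =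
      Equiv.swap 0 1 (Equiv.swap 0 1 (i + k) + e) + r := by
  simp only [DFA.evalFrom_of_append, DFA.evalFrom_cons, U2dfa_evalFrom_replicate_zero,
    U2dfa_step_one]

end Cyclic

section Reachability

open Fin.CommRing

variable {m n : ℕ} [NeZero m] [NeZero n]

theorem exists_word_fix_fst_succ_snd (hmn : m < n) (hn : 3 ≤ n) (j : Fin n) :
    ∃ w, (∀ i, (U2dfa m m.pos_of_neZero).evalFrom i w = i) ∧
      (U2dfa n n.pos_of_neZero).evalFrom j w = j + 1 := by
  obtain ⟨e, hme, hne, hne1⟩ := exists_dvd_not_dvd_not_dvd_succ m.pos_of_neZero hmn hn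
  have hj : j.val ≤ m * n := j.is_lt.le.trans (Nat.le_mul_of_pos_left n m.pos_of_neZero)
  -- `aᵏ b aᵉ b aʳ` with `k ≡ -j` and `e + r ≡ j (mod n)`, and `k + r ≡ 0 (mod m)`
  refine ⟨List.replicate (m * n - j) 0 ++ 1 :: List.replicate e 0 ++
    1 :: List.replicate ((n - 1) * e + j) 0, fun i => ?_, ?_⟩ <;> rw [U2dfa_evalFrom_conj]
  · have he : (e : Fin m) = 0 := Fin.natCast_eq_zero.mpr hme
    rw [he, add_zero, Equiv.swap_apply_self]
    push_cast [Nat.cast_sub hj, Nat.cast_sub NeZero.one_le]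
    linear_combination (n : Fin m) * Fin.natCast_self m + ((n : Fin m) - 1) * he
  · have hk : j + ((m * n - j : ℕ) : Fin n) = 0 := by
      push_cast [Nat.cast_sub hj]
      simp
    have he0 : 1 + (e : Fin n) ≠ 0 := by
      rw [← Nat.cast_one, ← Nat.cast_add, Ne, Fin.natCast_eq_zero, add_comm]
      exact hne1
    have he1 : 1 + (e : Fin n) ≠ 1 := by simpa [Fin.natCast_eq_zero] using hne
    rw [hk, Equiv.swap_apply_left, Equiv.swap_apply_of_ne_of_ne he0 he1]
    push_cast [Nat.cast_sub NeZero.one_le]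
    linear_combination (e : Fin n) * Fin.natCast_self n

theorem exists_word_fix_fst_add_snd (hmn : m < n) (hn : 3 ≤ n) (j : Fin n) (t : ℕ) :
    ∃ w, (∀ i, (U2dfa m m.pos_of_neZero).evalFrom i w = i) ∧
      (U2dfa n n.pos_of_neZero).evalFrom j w = j + t := by
  induction t with
  | zero => exact ⟨[], fun _ => rfl, by simp⟩
  | succ t ih =>
    obtain ⟨w, hw₁, hw₂⟩ := ih
    obtain ⟨v, hv₁, hv₂⟩ := exists_word_fix_fst_succ_snd hmn hn (j + t)
    refine ⟨w ++ v, fun i => by rw [DFA.evalFrom_of_append, hw₁, hv₁], ?_⟩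
    rw [DFA.evalFrom_of_append, hw₂, hv₂]
    push_cast
    ring

theorem exists_word_evalFrom_zero_eq_of_lt (hmn : m < n) (hn : 3 ≤ n) (i : Fin m) (j : Fin n) :
    ∃ w, (U2dfa m m.pos_of_neZero).evalFrom 0 w = i ∧
      (U2dfa n n.pos_of_neZero).evalFrom 0 w = j := by
  obtain ⟨w, hw₁, hw₂⟩ := exists_word_fix_fst_add_snd hmn hn (i.val : Fin n) (j - i.val).val
  refine ⟨List.replicate i.val 0 ++ w, ?_, ?_⟩ <;>
    rw [DFA.evalFrom_of_append, U2dfa_evalFrom_replicate_zero, zero_add]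
  · rw [Fin.cast_val_eq_self, hw₁]
  · rw [hw₂, Fin.cast_val_eq_self]
    abel

theorem exists_word_evalFrom_zero_eq (hmn : m ≠ n) (h3 : 3 ≤ max m n) (i : Fin m) (j : Fin n) :
    ∃ w, (U2dfa m m.pos_of_neZero).evalFrom 0 w = i ∧
      (U2dfa n n.pos_of_neZero).evalFrom 0 w = j := by
  rcases hmn.lt_or_gt with hlt | hgt
  · exact exists_word_evalFrom_zero_eq_of_lt hlt (by omega) i j
  · obtain ⟨w, hw₂, hw₁⟩ := exists_word_evalFrom_zero_eq_of_lt hgt (by omega) j i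
    exact ⟨w, hw₁, hw₂⟩

theorem prodDFA_U2dfa_eval_surjective (hmn : m ≠ n) (h3 : 3 ≤ max m n)
    (acc : Set (Fin m × Fin n)) :
    Surjective (prodDFA (U2dfa m m.pos_of_neZero) (U2dfa n n.pos_of_neZero) acc).eval := by
  rintro ⟨i, j⟩
  obtain ⟨w, hw₁, hw₂⟩ := exists_word_evalFrom_zero_eq hmn h3 i j
  exact ⟨w, (prodDFA_evalFrom _ _ _ _ w).trans (Prod.ext hw₁ hw₂)⟩

end Reachability

end SCPaper

theorem inter_same_stream_tight (m n : ℕ) (hm : 3 ≤ m) (hn : 3 ≤ n) (hmn : m ≠ n) :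
    sc (linter (U2 m (by omega)) (U2 n (by omega))) = m * n ∧
    (∀ p : Fin m × Fin n, ∃ w : List (Fin 2),
      (prodDFA (U2dfa m (by omega)) (U2dfa n (by omega)) ({x : Fin m × Fin n | x.1.val = m - 1 ∧ x.2.val = n - 1} : Set (Fin m × Fin n))).eval w = p) ∧
    (∀ p q : Fin m × Fin n, p ≠ q → ∃ w : List (Fin 2),
      Xor' ((prodDFA (U2dfa m (by omega)) (U2dfa n (by omega)) ({x : Fin m × Fin n | x.1.val = m - 1 ∧ x.2.val = n - 1} : Set (Fin m × Fin n))).evalFrom p w ∈ ({x : Fin m × Fin n | x.1.val = m - 1 ∧ x.2.val = n - 1} : Set (Fin m × Fin n)))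
           ((prodDFA (U2dfa m (by omega)) (U2dfa n (by omega)) ({x : Fin m × Fin n | x.1.val = m - 1 ∧ x.2.val = n - 1} : Set (Fin m × Fin n))).evalFrom q w ∈ ({x : Fin m × Fin n | x.1.val = m - 1 ∧ x.2.val = n - 1} : Set (Fin m × Fin n)))) := by
  have : NeZero m := ⟨by omega⟩
  have : NeZero n := ⟨by omega⟩
  let P := prodDFA (U2dfa m m.pos_of_neZero) (U2dfa n n.pos_of_neZero)
    {x : Fin m × Fin n | x.1.val = m - 1 ∧ x.2.val = n - 1}
  have hinj := prodDFA_step_injective U2dfa_step_injective U2dfa_step_injective P.accept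
  have hreach : Surjective P.eval := prodDFA_U2dfa_eval_surjective hmn (by omega) _
  have hacc : P.accept.Subsingleton := fun x hx y hy =>
    Prod.ext (Fin.ext (hx.1.trans hy.1.symm)) (Fin.ext (hx.2.trans hy.2.symm))
  have hdist (p q) (hpq : p ≠ q) := P.exists_xor_of_accept_subsingleton hinj
    (P.exists_evalFrom_eq hinj hreach) (f := (⟨m - 1, by omega⟩, ⟨n - 1, by omega⟩)) ⟨rfl, rfl⟩
    hacc hpq
  have hsc : sc P.accepts = m * n := by
    simpa using sc_accepts_eq_card P hreach (P.acceptsFrom_injective hdist)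
  have hL : P.accepts = linter (U2 m _) (U2 n _) := accepts_prodDFA_inter _ _
  rw [hL] at hsc
  exact ⟨hsc, hreach, hdist⟩
end
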